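/- arXiv:1801.05360 — 3 statements merged into one kernel-verified Lean document; each statement's English description precedes it below -/
import Mathlib

section
/- Given points P_s, P_{s+1}, …, P_{s+k} in ℝ³ with strictly increasing time coordinates, and ε > 0, there exists a point Q with Q.t = P_{s+k}.t such that for every i ∈ [1,k] the synchronized point P'_{s+i} of P_{s+i} w.r.t. the segment from P_s to Q satisfies |P_{s+i} - P'_{s+i}| ≤ ε, if and only if the intersection of the k spatio-temporal cones C(P_s, O(P_{s+i}, ε)), i = 1,…,k, contains a point other than P_s. -/
noncomputable section

/-- Points of ℝ³, written (x, y, t) with the third coordinate interpreted as time. -/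
abbrev Pt : Type := EuclideanSpace ℝ (Fin 3)

/-- The time coordinate of a point. -/
def tm (P : Pt) : ℝ := P 2

/-- Spatial (x,y)-Euclidean distance between two points of ℝ³. -/
def sdist (P Q : Pt) : ℝ := Real.sqrt ((P 0 - Q 0)^2 + (P 1 - Q 1)^2)

/-- The synchronized point of `P` w.r.t. the segment from `Ps` to `E`:
linear interpolation with coefficient `c = (P.t - Ps.t)/(E.t - Ps.t)`. -/
def sync (Ps E P : Pt) : Pt := Ps + ((tm P - tm Ps) / (tm E - tm Ps)) • (E - Ps)

/-- The synchronous Euclidean distance of `P` to the segment from `Ps` to `E`. -/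
def sed (P Ps E : Pt) : ℝ := dist P (sync Ps E P)

/-- The spatio-temporal cone with apex `Ps` over the disk of radius `ε`
centered at `C` in the plane `X.t = C.t`: the union of all segments from `Ps`
to points of that disk. -/
def cone (Ps C : Pt) (ε : ℝ) : Set Pt :=
  {X | ∃ Z : Pt, tm Z = tm C ∧ sdist Z C ≤ ε ∧ X ∈ segment ℝ Ps Z}

lemma tm_lin (A B : Pt) (c : ℝ) : tm (A + c • (B - A)) = tm A + c * (tm B - tm A) := by
  simp [tm, PiLp.add_apply, PiLp.smul_apply, PiLp.sub_apply, smul_eq_mul]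

lemma dist_eq_sdist {A B : Pt} (h : tm A = tm B) : dist A B = sdist A B := by
  rw [EuclideanSpace.dist_eq, sdist, Fin.sum_univ_three]
  have h2 : A 2 = B 2 := h
  simp [Real.dist_eq, sq_abs, h2]

lemma tm_sync (Ps E Pp : Pt) (h : tm E ≠ tm Ps) : tm (sync Ps E Pp) = tm Pp := by
  rw [sync, tm_lin, div_mul_cancel₀ _ (sub_ne_zero.mpr h)]
  ring

/-- existence of a point Q at time P_{s+k}.t with all synchronous
distances at most ε iff the k spatio-temporal cones share a point other than P_s. -/
theorem stmt1 (k : ℕ) (hk : 1 ≤ k) (P : ℕ → Pt)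
    (hmono : ∀ i j : ℕ, i < j → j ≤ k → tm (P i) < tm (P j))
    (ε : ℝ) (hε : 0 < ε) :
    (∃ Q : Pt, tm Q = tm (P k) ∧ ∀ i : ℕ, 1 ≤ i → i ≤ k →
        dist (P i) (sync (P 0) Q (P i)) ≤ ε) ↔
      (∃ X : Pt, X ≠ P 0 ∧ ∀ i : ℕ, 1 ≤ i → i ≤ k → X ∈ cone (P 0) (P i) ε) := by
  have h0k : tm (P 0) < tm (P k) := hmono 0 k (by omega) le_rfl
  have h0i : ∀ i : ℕ, 1 ≤ i → i ≤ k → tm (P 0) < tm (P i) :=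
    fun i h1 h2 => hmono 0 i (by omega) h2
  have h1i : ∀ i : ℕ, 1 ≤ i → i ≤ k → tm (P 1) ≤ tm (P i) := by
    intro i h1 h2
    rcases eq_or_lt_of_le h1 with h | h
    · rw [← h]
    · exact (hmono 1 i h h2).le
  constructor
  · rintro ⟨Q, hQt, hQ⟩
    have hQ0 : tm Q ≠ tm (P 0) := by rw [hQt]; exact h0k.ne'
    refine ⟨sync (P 0) Q (P 1), ?_, ?_⟩
    · intro hXe
      have := tm_sync (P 0) Q (P 1) hQ0
      rw [hXe] at this
      exact absurd this (h0i 1 le_rfl hk).ne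
    · intro i hi1 hik
      refine ⟨sync (P 0) Q (P i), tm_sync (P 0) Q (P i) hQ0, ?_, ?_⟩
      · rw [← dist_eq_sdist (tm_sync (P 0) Q (P i) hQ0), dist_comm]
        exact hQ i hi1 hik
      · rw [segment_eq_image']
        set c1 := (tm (P 1) - tm (P 0)) / (tm Q - tm (P 0)) with hc1
        set ci := (tm (P i) - tm (P 0)) / (tm Q - tm (P 0)) with hci
        have hQpos : 0 < tm Q - tm (P 0) := by rw [hQt]; linarith
        have hc1pos : 0 < c1 := div_pos (by linarith [h0i 1 le_rfl hk]) hQpos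
        have hcipos : 0 < ci := div_pos (by linarith [h0i i hi1 hik]) hQpos
        have hle : c1 ≤ ci :=
          div_le_div_of_nonneg_right (by linarith [h1i i hi1 hik]) hQpos.le
        refine ⟨c1 / ci, ⟨div_nonneg hc1pos.le hcipos.le, div_le_one_of_le₀ hle hcipos.le⟩, ?_⟩
        show P 0 + (c1 / ci) • (sync (P 0) Q (P i) - P 0) = sync (P 0) Q (P 1)
        rw [sync, sync, add_sub_cancel_left, smul_smul, div_mul_cancel₀ _ hcipos.ne']
  · rintro ⟨X, hX0, hX⟩
    obtain ⟨Z1, hZ1t, _, hseg1⟩ := hX 1 le_rfl hk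
    rw [segment_eq_image'] at hseg1
    obtain ⟨θ1, hθ1, hXeq⟩ := hseg1
    have hθ1ne : θ1 ≠ 0 := by
      rintro rfl
      apply hX0
      rw [← hXeq]; simp
    have htX : tm X = tm (P 0) + θ1 * (tm (P 1) - tm (P 0)) := by
      rw [← hXeq, tm_lin, hZ1t]
    have htX0 : 0 < tm X - tm (P 0) := by
      rw [htX]
      have : 0 < θ1 := lt_of_le_of_ne hθ1.1 (Ne.symm hθ1ne)
      nlinarith [h0i 1 le_rfl hk]
    set r := (tm (P k) - tm (P 0)) / (tm X - tm (P 0)) with hr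
    set Q := P 0 + r • (X - P 0) with hQdef
    have hQt : tm Q = tm (P k) := by
      rw [hQdef, tm_lin, hr, div_mul_cancel₀ _ htX0.ne']
      ring
    refine ⟨Q, hQt, ?_⟩
    intro i hi1 hik
    obtain ⟨Z, hZt, hZd, hseg⟩ := hX i hi1 hik
    rw [segment_eq_image'] at hseg
    obtain ⟨θ, hθ, hXe⟩ := hseg
    have hθne : θ ≠ 0 := by
      rintro rfl
      apply hX0
      rw [← hXe]; simp
    have hXsub : X - P 0 = θ • (Z - P 0) := by rw [← hXe, add_sub_cancel_left]
    have htXi : tm X - tm (P 0) = θ * (tm (P i) - tm (P 0)) := by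
      rw [← hXe, tm_lin, hZt]; ring
    have hQsub : Q - P 0 = (r * θ) • (Z - P 0) := by
      rw [hQdef, add_sub_cancel_left, hXsub, smul_smul]
    have hscal : (tm (P i) - tm (P 0)) / (tm Q - tm (P 0)) * (r * θ) = 1 := by
      rw [hQt, hr]
      have hni : tm (P i) - tm (P 0) ≠ 0 := by have := h0i i hi1 hik; linarith
      have hnk : tm (P k) - tm (P 0) ≠ 0 := by linarith
      rw [htXi]
      field_simp
    have hsync : sync (P 0) Q (P i) = Z := by
      rw [sync, hQsub, smul_smul, hscal, one_smul, add_sub_cancel]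
    rw [hsync, dist_comm, dist_eq_sdist hZt]
    exact hZd
end
end

section
/- Given points P_s, P_{s+1}, …, P_{s+k} in ℝ³ with strictly increasing time coordinates and ε > 0, if the intersection of the k narrow spatio-temporal cones C(P_s, O(P_{s+i}, ε/2)), i = 1,…,k, contains a point other than P_s, then sed(P_{s+i}, segment from P_s to P_{s+k}) ≤ ε for every i ∈ [1,k]. -/
noncomputable section

/-- if the narrow cones (radius ε/2) share a point other than P_s,
then every point has synchronous distance at most ε to the segment P_sP_{s+k}. -/
theorem stmt7 (k : ℕ) (hk : 1 ≤ k) (P : ℕ → Pt)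
    (hmono : ∀ i j : ℕ, i < j → j ≤ k → tm (P i) < tm (P j))
    (ε : ℝ) (hε : 0 < ε)
    (h : ∃ X : Pt, X ≠ P 0 ∧ ∀ i : ℕ, 1 ≤ i → i ≤ k → X ∈ cone (P 0) (P i) (ε / 2)) :
    ∀ i : ℕ, 1 ≤ i → i ≤ k → sed (P i) (P 0) (P k) ≤ ε := by
  obtain ⟨X, hX0, hX⟩ := h
  set L : ℕ → Pt := fun j =>
    P 0 + ((tm (P j) - tm (P 0)) / (tm X - tm (P 0))) • (X - P 0) with hL
  have key : ∀ j : ℕ, 1 ≤ j → j ≤ k → dist (P j) (L j) ≤ ε / 2 := by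
    intro j hj1 hjk
    have htj : tm (P 0) < tm (P j) := hmono 0 j hj1 hjk
    obtain ⟨Z, hZt, hZd, hseg⟩ := hX j hj1 hjk
    rw [segment_eq_image'] at hseg
    obtain ⟨θ, ⟨hθ0, hθ1⟩, hXeq⟩ := hseg
    have hθne : θ ≠ 0 := by
      intro h0
      apply hX0
      simp [← hXeq, h0]
    have hx2 : tm X - tm (P 0) = θ * (tm (P j) - tm (P 0)) := by
      have : X 2 = P 0 2 + θ * (Z 2 - P 0 2) := by
        rw [← hXeq]
        simp [PiLp.add_apply, PiLp.smul_apply, PiLp.sub_apply, smul_eq_mul]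
      have hz2 : Z 2 = P j 2 := hZt
      simp only [tm] at *
      rw [this, hz2]; ring
    have hcoef : (tm (P j) - tm (P 0)) / (tm X - tm (P 0)) = θ⁻¹ := by
      rw [hx2, mul_comm, div_mul_eq_div_div, div_self (by linarith), one_div]
    have hLZ : L j = Z := by
      have hXP : X - P 0 = θ • (Z - P 0) := by
        rw [← hXeq]; module
      rw [hL]
      simp only
      rw [hcoef, hXP, smul_smul, inv_mul_cancel₀ hθne, one_smul]
      abel
    rw [hLZ]
    have hd : dist (P j) Z = sdist Z (P j) := by
      rw [EuclideanSpace.dist_eq, sdist]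
      have hz2 : Z 2 = P j 2 := hZt
      congr 1
      rw [Fin.sum_univ_three, hz2]
      simp [Real.dist_eq, sq_abs]
      ring
    rw [hd]
    exact hZd
  intro i h1i hik
  have hti : tm (P 0) < tm (P i) := hmono 0 i h1i hik
  have htk : tm (P 0) < tm (P k) := hmono 0 k hk le_rfl
  have htik : tm (P i) ≤ tm (P k) := by
    rcases lt_or_eq_of_le hik with h' | h'
    · exact le_of_lt (hmono i k h' le_rfl)
    · rw [h']
  set c : ℝ := (tm (P i) - tm (P 0)) / (tm (P k) - tm (P 0)) with hc
  have hc0 : 0 ≤ c := div_nonneg (by linarith) (by linarith)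
  have hc1 : c ≤ 1 := by
    rw [hc, div_le_one (by linarith)]; linarith
  have hLi : L i = P 0 + c • (L k - P 0) := by
    rw [hL]
    simp only
    have h1 : (P 0 + ((tm (P k) - tm (P 0)) / (tm X - tm (P 0))) • (X - P 0)) - P 0
        = ((tm (P k) - tm (P 0)) / (tm X - tm (P 0))) • (X - P 0) := by abel
    rw [h1, smul_smul]
    congr 2
    rw [hc]
    have hne : tm (P k) - tm (P 0) ≠ 0 := ne_of_gt (by linarith)
    rw [div_mul_div_comm, mul_comm (tm (P i) - tm (P 0)) (tm (P k) - tm (P 0)),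
      mul_div_mul_left _ _ hne]
  have hsync : sync (P 0) (P k) (P i) = P 0 + c • (P k - P 0) := rfl
  have hdiff : sync (P 0) (P k) (P i) - L i = c • (P k - L k) := by
    rw [hsync, hLi]
    module
  have hdist2 : dist (sync (P 0) (P k) (P i)) (L i) ≤ ε / 2 := by
    rw [dist_eq_norm, hdiff, norm_smul, Real.norm_eq_abs, abs_of_nonneg hc0]
    have := key k hk le_rfl
    rw [dist_eq_norm] at this
    calc c * ‖P k - L k‖ ≤ 1 * ‖P k - L k‖ := by
          apply mul_le_mul_of_nonneg_right hc1 (norm_nonneg _)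
      _ = ‖P k - L k‖ := one_mul _
      _ ≤ ε / 2 := this
  have hdist1 : dist (P i) (L i) ≤ ε / 2 := key i h1i hik
  calc sed (P i) (P 0) (P k)
      = dist (P i) (sync (P 0) (P k) (P i)) := rfl
    _ ≤ dist (P i) (L i) + dist (L i) (sync (P 0) (P k) (P i)) := dist_triangle _ _ _
    _ ≤ ε / 2 + ε / 2 := by
        rw [dist_comm (L i)]
        exact add_le_add hdist1 hdist2
    _ = ε := by ring
end
end

section
/- Let P_s, …, P_{s+k} in ℝ³ have strictly increasing time coordinates, ε > 0, and t_c = P_{s+k}.t. For each i ∈ [1,k] let R_{s+i} be the inscribed regular m-gon of the projection disk of cone C(P_s, O(P_{s+i}, ε)) on the plane X.t = t_c. If R*_k = ⋂_{i=1}^k R_{s+i} is nonempty, then for every point Q in R*_k (viewed as a point with Q.t = t_c), sed(P_{s+i}, segment P_sQ) ≤ ε for all i ∈ [1,k]. -/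
/-! Each m-gon is the convex hull of points on the boundary circle of its projection disk, so it
lies in that disk, in the plane `t = t_c`. The homothety of ratio `c⁻¹` centred at `P_s` maps this
plane to `t = P_{s+i}.t`, the projection disk onto `O(P_{s+i}, ε)`, and `Q` to the synchronized
point of `P_{s+i}` on `P_s Q`; hence `sed(P_{s+i}, P_s Q) = c⁻¹ · dist(Q, centre) ≤ ε`. -/

noncomputable section

/-- The j-th vertex direction in the spatial plane (time coordinate 0). -/
def uvec3 (m j : ℕ) : Pt :=
  WithLp.toLp 2 ![Real.cos (2 * Real.pi * j / m), Real.sin (2 * Real.pi * j / m), 0]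

/-- The inscribed regular m-gon of the projection disk (on the plane
X.t = t_c) of the cone with apex Ps over the disk of radius ε centered at Pi:
the disk has center Ps + c·(Pi - Ps) and radius c·ε, c = (t_c - Ps.t)/(Pi.t - Ps.t). -/
def projNgon (Ps Pi : Pt) (ε tc : ℝ) (m : ℕ) : Set Pt :=
  convexHull ℝ (Set.range fun j : Fin m =>
    (Ps + ((tc - tm Ps) / (tm Pi - tm Ps)) • (Pi - Ps)) +
      (((tc - tm Ps) / (tm Pi - tm Ps)) * ε) • uvec3 m (j : ℕ))

@[simp] lemma tm_add (X Y : Pt) : tm (X + Y) = tm X + tm Y := rfl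

@[simp] lemma tm_sub (X Y : Pt) : tm (X - Y) = tm X - tm Y := rfl

@[simp] lemma tm_smul (r : ℝ) (X : Pt) : tm (r • X) = r * tm X := rfl

@[simp] lemma tm_uvec3 (m j : ℕ) : tm (uvec3 m j) = 0 := rfl

lemma norm_uvec3 (m j : ℕ) : ‖uvec3 m j‖ = 1 := by
  simp [EuclideanSpace.norm_eq, uvec3, Fin.sum_univ_three]

lemma projNgon_subset_closedBall (Ps Pi : Pt) (ε tc : ℝ) (m : ℕ) :
    projNgon Ps Pi ε tc m ⊆ Metric.closedBall
      (Ps + ((tc - tm Ps) / (tm Pi - tm Ps)) • (Pi - Ps))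
      |(tc - tm Ps) / (tm Pi - tm Ps) * ε| := by
  refine convexHull_min ?_ (convex_closedBall _ _)
  rintro _ ⟨j, rfl⟩
  simp [norm_smul, norm_uvec3, abs_div]

lemma tm_eq_of_mem_projNgon {Ps Pi X : Pt} {ε tc : ℝ} {m : ℕ} (h : tm Pi ≠ tm Ps)
    (hX : X ∈ projNgon Ps Pi ε tc m) : tm X = tc := by
  have hplane : Convex ℝ {Y : Pt | tm Y = tc} :=
    convex_hyperplane ⟨tm_add, tm_smul⟩ tc
  refine convexHull_min ?_ hplane hX
  rintro _ ⟨j, rfl⟩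
  have : tm Pi - tm Ps ≠ 0 := sub_ne_zero.mpr h
  simp only [Set.mem_ofPred_eq, tm_add, tm_smul, tm_sub, tm_uvec3, mul_zero, add_zero]
  field_simp
  ring

lemma sed_eq_inv_mul_dist (Ps Pi Q : Pt) (hc : (tm Q - tm Ps) / (tm Pi - tm Ps) ≠ 0) :
    sed Pi Ps Q = |(tm Q - tm Ps) / (tm Pi - tm Ps)|⁻¹ *
      dist Q (Ps + ((tm Q - tm Ps) / (tm Pi - tm Ps)) • (Pi - Ps)) := by
  set c := (tm Q - tm Ps) / (tm Pi - tm Ps)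
  have hsync : sync Ps Q Pi = Ps + c⁻¹ • (Q - Ps) := by
    rw [sync, inv_div]
  have hdiff : Pi - sync Ps Q Pi = c⁻¹ • (Ps + c • (Pi - Ps) - Q) := by
    rw [hsync]
    match_scalars <;> field_simp; ring
  rw [sed, dist_eq_norm, hdiff, norm_smul, norm_inv, Real.norm_eq_abs, dist_eq_norm']

lemma sed_le_of_mem_projNgon {Ps Pi Q : Pt} {ε tc : ℝ} {m : ℕ} (hi : tm Pi ≠ tm Ps)
    (hc : tc ≠ tm Ps) (hε : 0 ≤ ε) (hQ : Q ∈ projNgon Ps Pi ε tc m) :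
    sed Pi Ps Q ≤ ε := by
  have htQ : tm Q = tc := tm_eq_of_mem_projNgon hi hQ
  have hc0 : (tc - tm Ps) / (tm Pi - tm Ps) ≠ 0 :=
    div_ne_zero (sub_ne_zero.mpr hc) (sub_ne_zero.mpr hi)
  have hball := projNgon_subset_closedBall Ps Pi ε tc m hQ
  rw [Metric.mem_closedBall, abs_mul, abs_of_nonneg hε] at hball
  rw [sed_eq_inv_mul_dist Ps Pi Q (htQ ▸ hc0), htQ]
  calc _ ≤ |(tc - tm Ps) / (tm Pi - tm Ps)|⁻¹ * (|(tc - tm Ps) / (tm Pi - tm Ps)| * ε) := by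
        gcongr
    _ = ε := by rw [inv_mul_cancel_left₀ (abs_ne_zero.mpr hc0)]

theorem stmt9_general (m : ℕ) (k : ℕ) (P : ℕ → Pt)
    (hmono : ∀ i j : ℕ, i < j → j ≤ k → tm (P i) < tm (P j))
    (ε : ℝ) (hε : 0 < ε) :
    ∀ Q ∈ ⋂ i ∈ Set.Icc 1 k, projNgon (P 0) (P i) ε (tm (P k)) m,
      ∀ i : ℕ, 1 ≤ i → i ≤ k → sed (P i) (P 0) Q ≤ ε := by
  intro Q hQ i hi1 hik
  exact sed_le_of_mem_projNgon (hmono 0 i (by omega) hik).ne' (hmono 0 k (by omega) le_rfl).ne'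
    hε.le (Set.mem_iInter₂.mp hQ i ⟨hi1, hik⟩)

/-- if the intersection of the inscribed regular m-gons of the
projection disks (on the plane X.t = P_{s+k}.t) is nonempty, then every point Q
of the intersection satisfies sed(P_{s+i}, segment P_sQ) ≤ ε for all i ∈ [1,k]. -/
theorem stmt9 (m : ℕ) (hm : 3 ≤ m) (k : ℕ) (hk : 1 ≤ k) (P : ℕ → Pt)
    (hmono : ∀ i j : ℕ, i < j → j ≤ k → tm (P i) < tm (P j))
    (ε : ℝ) (hε : 0 < ε) :
    ∀ Q ∈ ⋂ i ∈ Set.Icc 1 k, projNgon (P 0) (P i) ε (tm (P k)) m,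
      ∀ i : ℕ, 1 ≤ i → i ≤ k → sed (P i) (P 0) Q ≤ ε :=
  stmt9_general m k P hmono ε hε
end
end
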